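/- Let P, Q, R, S be pairwise distinct general atoms and p a nonlogical elementary atom. Then: (i) CL2 proves Blass's principle (P∧Q)∨(R∧S) → (P∨R)∧(Q∨S); (ii) CL2 proves P⊓(Q∨R) → (P⊓Q)∨(P⊓R); (iii) CL2 does not prove (P⊓Q)∨(P⊓R) → P⊓(Q∨R); (iv) CL2 proves (p⊓Q)∨(p⊓R) → p⊓(Q∨R). -/
import Mathlib


namespace CoL

/-- CL2-formulas: built from the logical atoms ⊤, ⊥, nonlogical elementary atoms
(`eatom`) and general atoms (`gatom`) by ¬, ∧, ∨, ⊓ (`cand`), ⊔ (`cor`).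
`F → G` abbreviates `(¬F) ∨ G`. -/
inductive GF : Type
  | top : GF
  | bot : GF
  | eatom (n : ℕ) : GF
  | gatom (n : ℕ) : GF
  | neg (f : GF) : GF
  | and (f g : GF) : GF
  | or (f g : GF) : GF
  | cand (f g : GF) : GF
  | cor (f g : GF) : GF
deriving DecidableEq

/-- `F → G` abbreviates `(¬F) ∨ G`. -/
def GF.imp (f g : GF) : GF := .or (.neg f) g

/-- Classical evaluation under an assignment to the elementary atoms (the clauses
for ⊓, ⊔ and general atoms are irrelevant junk: evaluation is only ever used on
elementarizations, which contain none of these). -/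
def GF.eval (v : ℕ → Bool) : GF → Bool
  | .top => true
  | .bot => false
  | .eatom n => v n
  | .gatom _ => false
  | .neg f => !f.eval v
  | .and f g => f.eval v && g.eval v
  | .or f g => f.eval v || g.eval v
  | .cand _ _ => false
  | .cor _ _ => false

/-- Classical tautology: true under every assignment. -/
def GF.Taut (f : GF) : Prop := ∀ v : ℕ → Bool, f.eval v = true

/-- The elementarization of a CL2-formula (with `pol` the polarity of the context,
`true` = positive): every surface occurrence of `G⊓H` is replaced by ⊤, every
surface occurrence of `G⊔H` by ⊥, every positive surface occurrence of a general
atom by ⊥ and every negative surface occurrence of a general atom by ⊤. -/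
def GF.elem : Bool → GF → GF
  | _, .top => .top
  | _, .bot => .bot
  | _, .eatom n => .eatom n
  | pol, .gatom _ => if pol then .bot else .top
  | pol, .neg f => .neg (GF.elem (!pol) f)
  | pol, .and f g => .and (GF.elem pol f) (GF.elem pol g)
  | pol, .or f g => .or (GF.elem pol f) (GF.elem pol g)
  | _, .cand _ _ => .top
  | _, .cor _ _ => .bot

/-- A CL2-formula is stable iff its elementarization is a classical tautology. -/
def GF.Stable (f : GF) : Prop := (GF.elem true f).Taut

/-- The elementary atom `q` occurs in the formula. -/
def GF.OccursE (q : ℕ) : GF → Prop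
  | .top => False
  | .bot => False
  | .eatom n => n = q
  | .gatom _ => False
  | .neg f => f.OccursE q
  | .and f g => f.OccursE q ∨ g.OccursE q
  | .or f g => f.OccursE q ∨ g.OccursE q
  | .cand f g => f.OccursE q ∨ g.OccursE q
  | .cor f g => f.OccursE q ∨ g.OccursE q

/-- `RuleAPrem pol F H`: `H` is the result of replacing in `F` one surface
occurrence of a subformula `G₁⊓G₂` occurring positively (resp. of `G₁⊔G₂`
occurring negatively) by `G_i`; `pol` is the polarity of the context. -/
inductive RuleAPrem : Bool → GF → GF → Prop
  | cand1 (g₁ g₂) : RuleAPrem true (.cand g₁ g₂) g₁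
  | cand2 (g₁ g₂) : RuleAPrem true (.cand g₁ g₂) g₂
  | cor1 (g₁ g₂) : RuleAPrem false (.cor g₁ g₂) g₁
  | cor2 (g₁ g₂) : RuleAPrem false (.cor g₁ g₂) g₂
  | negc {pol f h} : RuleAPrem (!pol) f h → RuleAPrem pol (.neg f) (.neg h)
  | andl {pol f h} (g) : RuleAPrem pol f h → RuleAPrem pol (.and f g) (.and h g)
  | andr {pol f h} (g) : RuleAPrem pol f h → RuleAPrem pol (.and g f) (.and g h)
  | orl {pol f h} (g) : RuleAPrem pol f h → RuleAPrem pol (.or f g) (.or h g)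
  | orr {pol f h} (g) : RuleAPrem pol f h → RuleAPrem pol (.or g f) (.or g h)

/-- `RuleBPrem pol F H`: `H` is the result of replacing in `F` one surface
occurrence of a subformula `G₁⊓G₂` occurring negatively (resp. of `G₁⊔G₂`
occurring positively) by `G_i`. -/
inductive RuleBPrem : Bool → GF → GF → Prop
  | cand1 (g₁ g₂) : RuleBPrem false (.cand g₁ g₂) g₁
  | cand2 (g₁ g₂) : RuleBPrem false (.cand g₁ g₂) g₂
  | cor1 (g₁ g₂) : RuleBPrem true (.cor g₁ g₂) g₁
  | cor2 (g₁ g₂) : RuleBPrem true (.cor g₁ g₂) g₂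
  | negc {pol f h} : RuleBPrem (!pol) f h → RuleBPrem pol (.neg f) (.neg h)
  | andl {pol f h} (g) : RuleBPrem pol f h → RuleBPrem pol (.and f g) (.and h g)
  | andr {pol f h} (g) : RuleBPrem pol f h → RuleBPrem pol (.and g f) (.and g h)
  | orl {pol f h} (g) : RuleBPrem pol f h → RuleBPrem pol (.or f g) (.or h g)
  | orr {pol f h} (g) : RuleBPrem pol f h → RuleBPrem pol (.or g f) (.or g h)

/-- `RepG P q occ pol F F'`: `F'` is the result of replacing in `F` one surface
occurrence of the general atom `P`, of polarity `occ` relative to the context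
polarity `pol`, by the elementary atom `q`. -/
inductive RepG (P q : ℕ) : Bool → Bool → GF → GF → Prop
  | here (pol) : RepG P q pol pol (.gatom P) (.eatom q)
  | negc {occ pol f h} : RepG P q occ (!pol) f h → RepG P q occ pol (.neg f) (.neg h)
  | andl {occ pol f h} (g) : RepG P q occ pol f h → RepG P q occ pol (.and f g) (.and h g)
  | andr {occ pol f h} (g) : RepG P q occ pol f h → RepG P q occ pol (.and g f) (.and g h)
  | orl {occ pol f h} (g) : RepG P q occ pol f h → RepG P q occ pol (.or f g) (.or h g)
  | orr {occ pol f h} (g) : RepG P q occ pol f h → RepG P q occ pol (.or g f) (.or g h)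

/-- Provability in CL2: Rules (a) and (b) as in CL1, plus Rule (c): `F` follows
from the result `F'` of replacing in `F` one positive and one negative surface
occurrence of some general atom `P` by a nonlogical elementary atom `q` not
occurring in `F`. -/
inductive CL2Prov : GF → Prop
  | ruleA {f} : f.Stable → (∀ h, RuleAPrem true f h → CL2Prov h) → CL2Prov f
  | ruleB {f h} : RuleBPrem true f h → CL2Prov h → CL2Prov f
  | ruleC {f g f' : GF} (P q : ℕ) : ¬ f.OccursE q →
      RepG P q true true f g → RepG P q false true g f' → CL2Prov f' → CL2Prov f


section Aux

/-- Compute the list of Rule (a) premises arising from one surface replacement. -/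
def GF.aPrems : Bool → GF → List GF
  | true, .cand g₁ g₂ => [g₁, g₂]
  | false, .cor g₁ g₂ => [g₁, g₂]
  | pol, .neg f => (GF.aPrems (!pol) f).map GF.neg
  | pol, .and f g =>
      ((GF.aPrems pol f).map fun h => GF.and h g) ++ ((GF.aPrems pol g).map fun h => GF.and f h)
  | pol, .or f g =>
      ((GF.aPrems pol f).map fun h => GF.or h g) ++ ((GF.aPrems pol g).map fun h => GF.or f h)
  | _, _ => []

lemma mem_aPrems : ∀ {pol f h}, RuleAPrem pol f h → h ∈ GF.aPrems pol f := by
  intro pol f h H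
  induction H with
  | cand1 g₁ g₂ => simp [GF.aPrems]
  | cand2 g₁ g₂ => simp [GF.aPrems]
  | cor1 g₁ g₂ => simp [GF.aPrems]
  | cor2 g₁ g₂ => simp [GF.aPrems]
  | negc _ ih => simp only [GF.aPrems, List.mem_map]; exact ⟨_, ih, rfl⟩
  | andl g _ ih =>
      simp only [GF.aPrems, List.mem_append, List.mem_map]; exact Or.inl ⟨_, ih, rfl⟩
  | andr g _ ih =>
      simp only [GF.aPrems, List.mem_append, List.mem_map]; exact Or.inr ⟨_, ih, rfl⟩
  | orl g _ ih =>
      simp only [GF.aPrems, List.mem_append, List.mem_map]; exact Or.inl ⟨_, ih, rfl⟩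
  | orr g _ ih =>
      simp only [GF.aPrems, List.mem_append, List.mem_map]; exact Or.inr ⟨_, ih, rfl⟩

lemma ruleA' {f : GF} (hs : f.Stable) (hp : ∀ h ∈ GF.aPrems true f, CL2Prov h) : CL2Prov f :=
  CL2Prov.ruleA hs fun h hh => hp h (mem_aPrems hh)

end Aux

section ProvHelpers

/-- `¬a ∨ (a ∨ X)` with `X` a general atom. -/
lemma prov_L1 (a x : ℕ) :
    CL2Prov (.or (.neg (.eatom a)) (.or (.eatom a) (.gatom x))) := by
  apply ruleA'
  · intro v; simp [GF.elem, GF.eval]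
  · intro h hh; simp [GF.aPrems] at hh

/-- `¬a ∨ (X ∨ a)` with `X` a general atom. -/
lemma prov_L2 (a x : ℕ) :
    CL2Prov (.or (.neg (.eatom a)) (.or (.gatom x) (.eatom a))) := by
  apply ruleA'
  · intro v; simp [GF.elem, GF.eval]
  · intro h hh; simp [GF.aPrems] at hh

/-- `¬(a∨b) ∨ (a∨b)` for elementary atoms. -/
lemma prov_L3 (a b : ℕ) :
    CL2Prov (.or (.neg (.or (.eatom a) (.eatom b))) (.or (.eatom a) (.eatom b))) := by
  apply ruleA'
  · intro v; cases hva : v a <;> cases hvb : v b <;> simp [GF.elem, GF.eval, hva, hvb]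
  · intro h hh; simp [GF.aPrems] at hh

/-- `¬a ∨ (a ∨ (X⊓Y))`. -/
lemma prov_M1 (a x y : ℕ) :
    CL2Prov (.or (.neg (.eatom a)) (.or (.eatom a) (.cand (.gatom x) (.gatom y)))) := by
  apply ruleA'
  · intro v; simp [GF.elem, GF.eval]
  · intro h hh; simp [GF.aPrems] at hh
    rcases hh with rfl | rfl
    · exact prov_L1 a x
    · exact prov_L1 a y

/-- `¬a ∨ ((X⊓Y) ∨ a)`. -/
lemma prov_M2 (a x y : ℕ) :
    CL2Prov (.or (.neg (.eatom a)) (.or (.cand (.gatom x) (.gatom y)) (.eatom a))) := by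
  apply ruleA'
  · intro v; simp [GF.elem, GF.eval]
  · intro h hh; simp [GF.aPrems] at hh
    rcases hh with rfl | rfl
    · exact prov_L2 a x
    · exact prov_L2 a y

end ProvHelpers

section ProvHelpers2

/-- `¬(X∨Y) ∨ (X∨Y)` for general atoms `X,Y`. -/
lemma prov_QR (x y : ℕ) :
    CL2Prov (.or (.neg (.or (.gatom x) (.gatom y))) (.or (.gatom x) (.gatom y))) := by
  apply CL2Prov.ruleC x 0
  · simp [GF.OccursE]
  · exact .orr _ (.orl _ (.here true))
  · exact .orl _ (.negc (.orl _ (.here false)))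
  apply CL2Prov.ruleC y 1
  · simp [GF.OccursE]
  · exact .orr _ (.orr _ (.here true))
  · exact .orl _ (.negc (.orr _ (.here false)))
  exact prov_L3 0 1

/-- `¬X ∨ (X ∨ (Y⊓Z))` for general atoms. -/
lemma prov_N1 (x y z : ℕ) :
    CL2Prov (.or (.neg (.gatom x)) (.or (.gatom x) (.cand (.gatom y) (.gatom z)))) := by
  apply CL2Prov.ruleC x 0
  · simp [GF.OccursE]
  · exact .orr _ (.orl _ (.here true))
  · exact .orl _ (.negc (.here false))
  exact prov_M1 0 y z

/-- `¬X ∨ ((Y⊓Z) ∨ X)` for general atoms. -/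
lemma prov_N2 (x y z : ℕ) :
    CL2Prov (.or (.neg (.gatom x)) (.or (.cand (.gatom y) (.gatom z)) (.gatom x))) := by
  apply CL2Prov.ruleC x 0
  · simp [GF.OccursE]
  · exact .orr _ (.orr _ (.here true))
  · exact .orl _ (.negc (.here false))
  exact prov_M2 0 y z

/-- `¬X ∨ (Y ∨ X)` for general atoms. -/
lemma prov_N3 (x y : ℕ) :
    CL2Prov (.or (.neg (.gatom x)) (.or (.gatom y) (.gatom x))) := by
  apply CL2Prov.ruleC x 0
  · simp [GF.OccursE]
  · exact .orr _ (.orr _ (.here true))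
  · exact .orl _ (.negc (.here false))
  exact prov_L2 0 y

/-- `¬X ∨ (X ∨ Y)` for general atoms. -/
lemma prov_N4 (x y : ℕ) :
    CL2Prov (.or (.neg (.gatom x)) (.or (.gatom x) (.gatom y))) := by
  apply CL2Prov.ruleC x 0
  · simp [GF.OccursE]
  · exact .orr _ (.orl _ (.here true))
  · exact .orl _ (.negc (.here false))
  exact prov_L1 0 y

end ProvHelpers2

section Parts

/-- Part (ii): `P⊓(Q∨R) → (P⊓Q)∨(P⊓R)`. -/
lemma prov_part2 (P Q R : ℕ) :
    CL2Prov (.or (.neg (.cand (.gatom P) (.or (.gatom Q) (.gatom R))))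
      (.or (.cand (.gatom P) (.gatom Q)) (.cand (.gatom P) (.gatom R)))) := by
  apply ruleA'
  · intro v; simp [GF.elem, GF.eval]
  · intro h hh; simp [GF.aPrems] at hh
    rcases hh with rfl | rfl | rfl | rfl
    · -- H1 : ¬(P⊓(Q∨R)) ∨ (P ∨ (P⊓R))
      exact CL2Prov.ruleB (.orl _ (.negc (.cand1 _ _))) (prov_N1 P P R)
    · -- H2 : ¬(P⊓(Q∨R)) ∨ (Q ∨ (P⊓R))
      apply ruleA'
      · intro v; simp [GF.elem, GF.eval]
      · intro h hh; simp [GF.aPrems] at hh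
        rcases hh with rfl | rfl
        · exact CL2Prov.ruleB (.orl _ (.negc (.cand1 _ _))) (prov_N3 P Q)
        · exact CL2Prov.ruleB (.orl _ (.negc (.cand2 _ _))) (prov_QR Q R)
    · -- H3 : ¬(P⊓(Q∨R)) ∨ ((P⊓Q) ∨ P)
      exact CL2Prov.ruleB (.orl _ (.negc (.cand1 _ _))) (prov_N2 P P Q)
    · -- H4 : ¬(P⊓(Q∨R)) ∨ ((P⊓Q) ∨ R)
      apply ruleA'
      · intro v; simp [GF.elem, GF.eval]
      · intro h hh; simp [GF.aPrems] at hh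
        rcases hh with rfl | rfl
        · exact CL2Prov.ruleB (.orl _ (.negc (.cand1 _ _))) (prov_N4 P R)
        · exact CL2Prov.ruleB (.orl _ (.negc (.cand2 _ _))) (prov_QR Q R)

/-- Part (iv): `(p⊓Q)∨(p⊓R) → p⊓(Q∨R)` with `p` elementary. -/
lemma prov_part4 (p Q R : ℕ) :
    CL2Prov (.or (.neg (.or (.cand (.eatom p) (.gatom Q)) (.cand (.eatom p) (.gatom R))))
      (.cand (.eatom p) (.or (.gatom Q) (.gatom R)))) := by
  apply ruleA'
  · intro v; simp [GF.elem, GF.eval]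
  · intro h hh; simp [GF.aPrems] at hh
    rcases hh with rfl | rfl
    · -- C1 : ¬((p⊓Q)∨(p⊓R)) ∨ p
      apply CL2Prov.ruleB (.orl _ (.negc (.orl _ (.cand1 _ _))))
      apply CL2Prov.ruleB (.orl _ (.negc (.orr _ (.cand1 _ _))))
      apply ruleA'
      · intro v; cases hv : v p <;> simp [GF.elem, GF.eval, hv]
      · intro h hh; simp [GF.aPrems] at hh
    · -- C2 : ¬((p⊓Q)∨(p⊓R)) ∨ (Q∨R)
      apply CL2Prov.ruleB (.orl _ (.negc (.orl _ (.cand2 _ _))))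
      apply CL2Prov.ruleB (.orl _ (.negc (.orr _ (.cand2 _ _))))
      exact prov_QR Q R

/-- Part (i): Blass's principle. -/
lemma prov_part1 (P Q R S : ℕ) :
    CL2Prov (.or (.neg (.or (.and (.gatom P) (.gatom Q)) (.and (.gatom R) (.gatom S))))
      (.and (.or (.gatom P) (.gatom R)) (.or (.gatom Q) (.gatom S)))) := by
  apply CL2Prov.ruleC P 0
  · simp [GF.OccursE]
  · exact .orr _ (.andl _ (.orl _ (.here true)))
  · exact .orl _ (.negc (.orl _ (.andl _ (.here false))))
  apply CL2Prov.ruleC Q 1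
  · simp [GF.OccursE]
  · exact .orr _ (.andr _ (.orl _ (.here true)))
  · exact .orl _ (.negc (.orl _ (.andr _ (.here false))))
  apply CL2Prov.ruleC R 2
  · simp [GF.OccursE]
  · exact .orr _ (.andl _ (.orr _ (.here true)))
  · exact .orl _ (.negc (.orr _ (.andl _ (.here false))))
  apply CL2Prov.ruleC S 3
  · simp [GF.OccursE]
  · exact .orr _ (.andr _ (.orr _ (.here true)))
  · exact .orl _ (.negc (.orr _ (.andr _ (.here false))))
  apply ruleA'
  · intro v
    cases h0 : v 0 <;> cases h1 : v 1 <;> cases h2 : v 2 <;> cases h3 : v 3 <;>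
      simp [GF.elem, GF.eval, h0, h1, h2, h3]
  · intro h hh; simp [GF.aPrems] at hh

end Parts

section Unprov

/-- Possible "left antecedent" states reachable from `P⊓Q`. -/
def BadX (P Q : ℕ) (x : GF) : Prop :=
  x = .cand (.gatom P) (.gatom Q) ∨ x = .gatom P ∨ x = .gatom Q

/-- The invariant set of unprovable formulas for part (iii). -/
def Bad (P Q R : ℕ) (f : GF) : Prop :=
  (∃ X Y, BadX P Q X ∧ BadX P R Y ∧
    f = .or (.neg (.or X Y)) (.cand (.gatom P) (.or (.gatom Q) (.gatom R)))) ∨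
  (∃ X Y, BadX P Q X ∧ BadX P R Y ∧ f = .or (.neg (.or X Y)) (.gatom P)) ∨
  (∃ n Y, BadX P R Y ∧ f = .or (.neg (.or (.eatom n) Y)) (.eatom n)) ∨
  (∃ n X, BadX P Q X ∧ f = .or (.neg (.or X (.eatom n))) (.eatom n))

lemma elem_badX {P Q : ℕ} {X : GF} (h : BadX P Q X) : GF.elem false X = .top := by
  rcases h with rfl | rfl | rfl <;> simp [GF.elem]

lemma not_bad {P Q R : ℕ} (hPQ : P ≠ Q) (hPR : P ≠ R) :
    ∀ f, CL2Prov f → ¬ Bad P Q R f := by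
  intro f hf
  induction hf with
  | @ruleA f hst hprem ih =>
    intro hbad
    rcases hbad with ⟨X, Y, hX, hY, rfl⟩ | ⟨X, Y, hX, hY, rfl⟩ | ⟨n, Y, hY, rfl⟩ | ⟨n, X, hX, rfl⟩
    · exact ih _ (RuleAPrem.orr _ (RuleAPrem.cand1 _ _))
        (Or.inr (Or.inl ⟨X, Y, hX, hY, rfl⟩))
    · have := hst (fun _ => false)
      simp [GF.elem, GF.eval, elem_badX hX, elem_badX hY] at this
    · have := hst (fun _ => false)
      simp [GF.elem, GF.eval, elem_badX hY] at this
    · have := hst (fun _ => false)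
      simp [GF.elem, GF.eval, elem_badX hX] at this
  | @ruleB f h hb _ ih =>
    intro hbad; apply ih
    rcases hbad with ⟨X, Y, hX, hY, rfl⟩ | ⟨X, Y, hX, hY, rfl⟩ | ⟨n, Y, hY, rfl⟩ | ⟨n, X, hX, rfl⟩
    · cases hb with
      | orl _ h1 =>
        cases h1 with
        | negc h2 =>
          cases h2 with
          | orl _ h3 =>
            rcases hX with rfl | rfl | rfl
            · cases h3 with
              | cand1 => exact Or.inl ⟨_, _, Or.inr (Or.inl rfl), hY, rfl⟩
              | cand2 => exact Or.inl ⟨_, _, Or.inr (Or.inr rfl), hY, rfl⟩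
            · cases h3
            · cases h3
          | orr _ h3 =>
            rcases hY with rfl | rfl | rfl
            · cases h3 with
              | cand1 => exact Or.inl ⟨_, _, hX, Or.inr (Or.inl rfl), rfl⟩
              | cand2 => exact Or.inl ⟨_, _, hX, Or.inr (Or.inr rfl), rfl⟩
            · cases h3
            · cases h3
      | orr _ h1 => cases h1
    · cases hb with
      | orl _ h1 =>
        cases h1 with
        | negc h2 =>
          cases h2 with
          | orl _ h3 =>
            rcases hX with rfl | rfl | rfl
            · cases h3 with
              | cand1 => exact Or.inr (Or.inl ⟨_, _, Or.inr (Or.inl rfl), hY, rfl⟩)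
              | cand2 => exact Or.inr (Or.inl ⟨_, _, Or.inr (Or.inr rfl), hY, rfl⟩)
            · cases h3
            · cases h3
          | orr _ h3 =>
            rcases hY with rfl | rfl | rfl
            · cases h3 with
              | cand1 => exact Or.inr (Or.inl ⟨_, _, hX, Or.inr (Or.inl rfl), rfl⟩)
              | cand2 => exact Or.inr (Or.inl ⟨_, _, hX, Or.inr (Or.inr rfl), rfl⟩)
            · cases h3
            · cases h3
      | orr _ h1 => cases h1
    · cases hb with
      | orl _ h1 =>
        cases h1 with
        | negc h2 =>
          cases h2 with
          | orl _ h3 => cases h3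
          | orr _ h3 =>
            rcases hY with rfl | rfl | rfl
            · cases h3 with
              | cand1 => exact Or.inr (Or.inr (Or.inl ⟨_, _, Or.inr (Or.inl rfl), rfl⟩))
              | cand2 => exact Or.inr (Or.inr (Or.inl ⟨_, _, Or.inr (Or.inr rfl), rfl⟩))
            · cases h3
            · cases h3
      | orr _ h1 => cases h1
    · cases hb with
      | orl _ h1 =>
        cases h1 with
        | negc h2 =>
          cases h2 with
          | orr _ h3 => cases h3
          | orl _ h3 =>
            rcases hX with rfl | rfl | rfl
            · cases h3 with
              | cand1 => exact Or.inr (Or.inr (Or.inr ⟨_, _, Or.inr (Or.inl rfl), rfl⟩))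
              | cand2 => exact Or.inr (Or.inr (Or.inr ⟨_, _, Or.inr (Or.inr rfl), rfl⟩))
            · cases h3
            · cases h3
      | orr _ h1 => cases h1
  | @ruleC f g f' P' q hq r1 r2 _ ih =>
    intro hbad; apply ih
    rcases hbad with ⟨X, Y, hX, hY, rfl⟩ | ⟨X, Y, hX, hY, rfl⟩ | ⟨n, Y, hY, rfl⟩ | ⟨n, X, hX, rfl⟩
    · -- no positive surface general atom
      cases r1 with
      | orl _ h1 =>
        cases h1 with
        | negc h2 =>
          cases h2 with
          | orl _ h3 => rcases hX with rfl | rfl | rfl <;> cases h3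
          | orr _ h3 => rcases hY with rfl | rfl | rfl <;> cases h3
      | orr _ h1 => cases h1
    · -- the only positive surface occurrence is the final `gatom P`
      cases r1 with
      | orl _ h1 =>
        cases h1 with
        | negc h2 =>
          cases h2 with
          | orl _ h3 => rcases hX with rfl | rfl | rfl <;> cases h3
          | orr _ h3 => rcases hY with rfl | rfl | rfl <;> cases h3
      | orr _ h1 =>
        cases h1 with
        | here =>
          -- g = ¬(X∨Y) ∨ eatom q, P' = P
          cases r2 with
          | orr _ h4 => cases h4
          | orl _ h4 =>
            cases h4 with
            | negc h5 =>
              cases h5 with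
              | orl _ h6 =>
                rcases hX with rfl | rfl | rfl
                · cases h6
                · cases h6 with
                  | here => exact Or.inr (Or.inr (Or.inl ⟨q, Y, hY, rfl⟩))
                · cases h6 with
                  | here => exact absurd rfl hPQ
              | orr _ h6 =>
                rcases hY with rfl | rfl | rfl
                · cases h6
                · cases h6 with
                  | here => exact Or.inr (Or.inr (Or.inr ⟨q, X, hX, rfl⟩))
                · cases h6 with
                  | here => exact absurd rfl hPR
    · cases r1 with
      | orl _ h1 =>
        cases h1 with
        | negc h2 =>
          cases h2 with
          | orl _ h3 => cases h3
          | orr _ h3 => rcases hY with rfl | rfl | rfl <;> cases h3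
      | orr _ h1 => cases h1
    · cases r1 with
      | orl _ h1 =>
        cases h1 with
        | negc h2 =>
          cases h2 with
          | orr _ h3 => cases h3
          | orl _ h3 => rcases hX with rfl | rfl | rfl <;> cases h3
      | orr _ h1 => cases h1

end Unprov
/-- For pairwise distinct general atoms `P,Q,R,S` and a nonlogical elementary atom
`p`: (i) CL2 proves Blass's principle `(P∧Q)∨(R∧S) → (P∨R)∧(Q∨S)`; (ii) CL2 proves
`P⊓(Q∨R) → (P⊓Q)∨(P⊓R)`; (iii) CL2 does not prove `(P⊓Q)∨(P⊓R) → P⊓(Q∨R)`;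
(iv) CL2 proves `(p⊓Q)∨(p⊓R) → p⊓(Q∨R)`. -/
theorem cl2_exercise (P Q R S p : ℕ)
    (hPQ : P ≠ Q) (hPR : P ≠ R) (hPS : P ≠ S) (hQR : Q ≠ R) (hQS : Q ≠ S)
    (hRS : R ≠ S) :
    CL2Prov (GF.imp
      (GF.or (GF.and (.gatom P) (.gatom Q)) (GF.and (.gatom R) (.gatom S)))
      (GF.and (GF.or (.gatom P) (.gatom R)) (GF.or (.gatom Q) (.gatom S)))) ∧
    CL2Prov (GF.imp
      (GF.cand (.gatom P) (GF.or (.gatom Q) (.gatom R)))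
      (GF.or (GF.cand (.gatom P) (.gatom Q)) (GF.cand (.gatom P) (.gatom R)))) ∧
    ¬ CL2Prov (GF.imp
      (GF.or (GF.cand (.gatom P) (.gatom Q)) (GF.cand (.gatom P) (.gatom R)))
      (GF.cand (.gatom P) (GF.or (.gatom Q) (.gatom R)))) ∧
    CL2Prov (GF.imp
      (GF.or (GF.cand (.eatom p) (.gatom Q)) (GF.cand (.eatom p) (.gatom R)))
      (GF.cand (.eatom p) (GF.or (.gatom Q) (.gatom R)))) := by
  refine ⟨prov_part1 P Q R S, prov_part2 P Q R, ?_, prov_part4 p Q R⟩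
  intro h
  exact not_bad hPQ hPR _ h (Or.inl ⟨_, _, Or.inl rfl, Or.inl rfl, rfl⟩)

end CoL
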